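/- Let $\mathscr{A}$ be a second-order elliptic operator on $\mathbb{R}^N$ and suppose there exists $\varphi \in C^2(\mathbb{R}^N)$ with $\lim_{|x|\to\infty}\varphi(x) = +\infty$ and a constant $\lambda > 0$ such that $(\mathscr{A}\varphi)(t,x) - \lambda\varphi(x) \le 0$ for all $(t,x) \in [a,b] \times \mathbb{R}^N$. If $u \in C_b([a,b]\times\mathbb{R}^N) \cap C^{1,2}((a,b]\times\mathbb{R}^N)$ satisfies $D_t u - \mathscr{A}u \le 0$ in $(a,b]\times\mathbb{R}^N$ and $u(a,\cdot) \le 0$, then $u(t,x) \le 0$ for all $(t,x) \in [a,b]\times\mathbb{R}^N$. -/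

import Mathlib

open Filter Set
open scoped Topology BigOperators

/-- Second-order partial derivative in coordinate directions `i`, `j`. -/
noncomputable def secondDerivCoord {N : ℕ} (f : EuclideanSpace ℝ (Fin N) → ℝ)
    (x : EuclideanSpace ℝ (Fin N)) (i j : Fin N) : ℝ :=
  fderiv ℝ (fun y => fderiv ℝ f y (EuclideanSpace.single i 1)) x (EuclideanSpace.single j 1)

/-- The nonautonomous second-order elliptic operator
`(𝒜 f)(s,x) = ∑ᵢⱼ qᵢⱼ(s,x) Dᵢⱼ f(x) + ∑ⱼ bⱼ(s,x) Dⱼ f(x)`. -/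
noncomputable def ellipticOp {N : ℕ}
    (q : ℝ → EuclideanSpace ℝ (Fin N) → Fin N → Fin N → ℝ)
    (b : ℝ → EuclideanSpace ℝ (Fin N) → Fin N → ℝ)
    (f : EuclideanSpace ℝ (Fin N) → ℝ) (s : ℝ) (x : EuclideanSpace ℝ (Fin N)) : ℝ :=
  (∑ i, ∑ j, q s x i j * secondDerivCoord f x i j)
    + ∑ j, b s x j * fderiv ℝ f x (EuclideanSpace.single j 1)


section Aux

variable {N : ℕ}
local notation "E" => EuclideanSpace ℝ (Fin N)

lemma hasDerivAt_line (x₀ w : E) (s : ℝ) :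
    HasDerivAt (fun s : ℝ => x₀ + s • w) w s := by
  simpa using ((hasDerivAt_id s).smul_const w).const_add x₀

/-- derivative along a line -/
lemma lineDeriv_aux {f : E → ℝ} (hf : ContDiff ℝ 2 f) (x₀ w : E) (s : ℝ) :
    HasDerivAt (fun s : ℝ => f (x₀ + s • w)) (fderiv ℝ f (x₀ + s • w) w) s := by
  have hfd : HasFDerivAt f (fderiv ℝ f (x₀ + s • w)) (x₀ + s • w) :=
    (hf.differentiable two_ne_zero _).hasFDerivAt
  exact hfd.comp_hasDerivAt s (hasDerivAt_line x₀ w s)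

lemma lineDeriv2_aux {f : E → ℝ} (hf : ContDiff ℝ 2 f) (x₀ w : E) :
    HasDerivAt (fun s : ℝ => fderiv ℝ f (x₀ + s • w) w)
      (fderiv ℝ (fderiv ℝ f) x₀ w w) (0:ℝ) := by
  have hF : DifferentiableAt ℝ (fderiv ℝ f) (x₀ + (0:ℝ) • w) :=
    ((hf.fderiv_right (le_refl 2)).differentiable one_ne_zero).differentiableAt
  have h1 : HasDerivAt (fun s : ℝ => fderiv ℝ f (x₀ + s • w))
      (fderiv ℝ (fderiv ℝ f) (x₀ + (0:ℝ) • w) w) (0:ℝ) :=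
    hF.hasFDerivAt.comp_hasDerivAt (0:ℝ) (hasDerivAt_line x₀ w 0)
  have h2 := h1.clm_apply (hasDerivAt_const (0:ℝ) w)
  simp only [zero_smul, add_zero, map_zero] at h2 ⊢
  simpa using h2

lemma quad_nonpos_at_max {f : E → ℝ} (hf : ContDiff ℝ 2 f) {x₀ : E}
    (hmax : ∀ x, f x ≤ f x₀) (w : E) :
    fderiv ℝ (fderiv ℝ f) x₀ w w ≤ 0 := by
  by_contra hL
  push_neg at hL
  set L := fderiv ℝ (fderiv ℝ f) x₀ w w with hLdef
  have hgrad : fderiv ℝ f x₀ = 0 := by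
    have : IsLocalMax f x₀ := Filter.Eventually.of_forall hmax
    exact this.fderiv_eq_zero
  set h : ℝ → ℝ := fun s => fderiv ℝ f (x₀ + s • w) w with hdef
  have hh0 : h 0 = 0 := by simp [hdef, hgrad]
  have hHD : HasDerivAt h L 0 := lineDeriv2_aux hf x₀ w
  -- slope tends to L > 0, so h s > 0 for small positive s
  have hslope : Tendsto (fun s => h s / s) (𝓝[>] (0:ℝ)) (𝓝 L) := by
    have := hasDerivAt_iff_tendsto_slope.mp hHD
    have h2 : Tendsto (slope h 0) (𝓝[>] (0:ℝ)) (𝓝 L) :=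
      this.mono_left (nhdsWithin_mono _ (fun s hs => ne_of_gt hs))
    refine h2.congr' ?_
    filter_upwards [self_mem_nhdsWithin] with s hs
    simp [slope, hh0, div_eq_inv_mul]
  have hpos : ∀ᶠ s in 𝓝[>] (0:ℝ), 0 < h s / s :=
    hslope.eventually (eventually_gt_nhds hL)
  obtain ⟨δ, hδpos, hδ⟩ :=
    ((nhdsGT_basis (0:ℝ)).eventually_iff.mp hpos)
  -- h is the derivative of g along the line; g strictly increases on [0, δ/...]
  have hgderiv : ∀ s : ℝ, HasDerivAt (fun s : ℝ => f (x₀ + s • w)) (h s) s :=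
    fun s => lineDeriv_aux hf x₀ w s
  set g : ℝ → ℝ := fun s => f (x₀ + s • w) with gdef
  have hmono : StrictMonoOn g (Icc 0 δ) := by
    refine strictMonoOn_of_deriv_pos (convex_Icc 0 δ)
      ((hf.continuous.comp (by continuity)).continuousOn) ?_
    intro s hs
    rw [interior_Icc] at hs
    rw [(hgderiv s).deriv]
    have hq := hδ ⟨hs.1, hs.2⟩
    have hspos : (0:ℝ) < s := hs.1
    rw [div_pos_iff] at hq
    rcases hq with ⟨h1, _⟩ | ⟨_, h2⟩ <;> linarith
  have h1 : g 0 < g δ := hmono (Set.left_mem_Icc.mpr hδpos.le)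
    (Set.right_mem_Icc.mpr hδpos.le) hδpos
  have h2 : g δ ≤ g 0 := by simpa [gdef] using hmax (x₀ + δ • w)
  linarith

lemma secondDerivCoord_eq {f : E → ℝ} (hf : ContDiff ℝ 2 f) (x : E) (i j : Fin N) :
    secondDerivCoord f x i j
      = fderiv ℝ (fderiv ℝ f) x (EuclideanSpace.single j 1) (EuclideanSpace.single i 1) := by
  have hdiff : DifferentiableAt ℝ (fderiv ℝ f) x :=
    ((hf.fderiv_right (le_refl 2)).differentiable one_ne_zero).differentiableAt
  unfold secondDerivCoord
  rw [fderiv_clm_apply hdiff (differentiableAt_const _)]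
  simp

lemma quad_sum_nonpos {M : Matrix (Fin N) (Fin N) ℝ} (hM : M.PosSemidef)
    (B : E →L[ℝ] E →L[ℝ] ℝ)
    (hB : ∀ v : E, B v v ≤ 0) :
    ∑ i, ∑ j, M i j * B (EuclideanSpace.single j 1) (EuclideanSpace.single i 1) ≤ 0 := by
  obtain ⟨A, hA⟩ : ∃ A : Matrix (Fin N) (Fin N) ℝ, M = A.conjTranspose * A := by
    open scoped MatrixOrder in
    obtain ⟨A, hA⟩ := CStarAlgebra.nonneg_iff_eq_star_mul_self.mp hM.nonneg
    exact ⟨A, hA⟩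
  have hM_entry : ∀ i j, M i j = ∑ k, A k i * A k j := by
    intro i j
    rw [hA]
    simp [Matrix.mul_apply, Matrix.conjTranspose_apply]
  set e : Fin N → E := fun i => EuclideanSpace.single i 1 with he
  set v : Fin N → E := fun k => ∑ j, A k j • e j with hv
  have hexp : ∀ k, B (v k) (v k) = ∑ p, ∑ r, A k p * A k r * B (e p) (e r) := by
    intro k
    rw [hv]
    simp only [map_sum, map_smul, ContinuousLinearMap.sum_apply,
      ContinuousLinearMap.smul_apply, smul_eq_mul, Finset.mul_sum]
    rw [Finset.sum_comm]
    apply Finset.sum_congr rfl; intro p _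
    apply Finset.sum_congr rfl; intro r _
    ring
  have key : ∑ i, ∑ j, M i j * B (e j) (e i) = ∑ k, B (v k) (v k) := by
    simp_rw [hexp, hM_entry, Finset.sum_mul]
    calc ∑ i, ∑ j, ∑ k, A k i * A k j * B (e j) (e i)
        = ∑ j, ∑ i, ∑ k, A k i * A k j * B (e j) (e i) := Finset.sum_comm
      _ = ∑ j, ∑ k, ∑ i, A k i * A k j * B (e j) (e i) :=
          Finset.sum_congr rfl fun j _ => Finset.sum_comm
      _ = ∑ k, ∑ j, ∑ i, A k i * A k j * B (e j) (e i) := Finset.sum_comm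
      _ = ∑ k, ∑ p, ∑ r, A k p * A k r * B (e p) (e r) := by
          apply Finset.sum_congr rfl; intro k _
          apply Finset.sum_congr rfl; intro p _
          apply Finset.sum_congr rfl; intro r _
          ring
  rw [key]
  exact Finset.sum_nonpos fun k _ => hB (v k)

lemma ellipticOp_nonpos_at_max
    (q : ℝ → E → Fin N → Fin N → ℝ) (b : ℝ → E → Fin N → ℝ) (t : ℝ) {x₀ : E}
    (hPSD : (Matrix.of fun i j => q t x₀ i j).PosSemidef)
    {f : E → ℝ} (hf : ContDiff ℝ 2 f) (hmax : ∀ x, f x ≤ f x₀) :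
    ellipticOp q b f t x₀ ≤ 0 := by
  have hloc : IsLocalMax f x₀ := Filter.Eventually.of_forall hmax
  have hgrad : fderiv ℝ f x₀ = 0 := hloc.fderiv_eq_zero
  unfold ellipticOp
  have hb0 : ∑ j, b t x₀ j * fderiv ℝ f x₀ (EuclideanSpace.single j 1) = 0 := by
    simp [hgrad]
  rw [hb0, add_zero]
  have hq := quad_sum_nonpos hPSD (fderiv ℝ (fderiv ℝ f) x₀) (quad_nonpos_at_max hf hmax)
  calc ∑ i, ∑ j, q t x₀ i j * secondDerivCoord f x₀ i j
      = ∑ i, ∑ j, (Matrix.of fun i j => q t x₀ i j) i j *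
          fderiv ℝ (fderiv ℝ f) x₀ (EuclideanSpace.single j 1) (EuclideanSpace.single i 1) := by
        apply Finset.sum_congr rfl; intro i _
        apply Finset.sum_congr rfl; intro j _
        rw [secondDerivCoord_eq hf x₀ i j]
        rfl
    _ ≤ 0 := hq

lemma psd_of_ell (q : ℝ → E → Fin N → Fin N → ℝ)
    (η : ℝ → E → ℝ) (η₀ : ℝ) (hη₀ : 0 < η₀) (hη : ∀ s x, η₀ ≤ η s x)
    (hsymm : ∀ s x i j, q s x i j = q s x j i)
    (hell : ∀ s x (ξ : Fin N → ℝ), η s x * ∑ i, ξ i ^ 2 ≤ ∑ i, ∑ j, q s x i j * ξ i * ξ j)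
    (s : ℝ) (x : E) : (Matrix.of fun i j => q s x i j).PosSemidef := by
  rw [Matrix.posSemidef_iff_dotProduct_mulVec]
  constructor
  · ext i j
    simp [Matrix.conjTranspose_apply, hsymm s x i j]
  · intro ξ
    have h2 : (0:ℝ) ≤ η s x * ∑ i, ξ i ^ 2 :=
      mul_nonneg (hη₀.le.trans (hη s x)) (Finset.sum_nonneg fun i _ => sq_nonneg _)
    have h3 : dotProduct (star ξ) ((Matrix.of fun i j => q s x i j).mulVec ξ)
        = ∑ i, ∑ j, q s x i j * ξ i * ξ j := by
      simp only [dotProduct, Matrix.mulVec, Matrix.of_apply, Pi.star_apply, star_trivial,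
        dotProduct]
      apply Finset.sum_congr rfl; intro i _
      rw [Finset.mul_sum]
      apply Finset.sum_congr rfl; intro j _
      ring
    rw [h3]
    exact h2.trans (hell s x ξ)

lemma ellipticOp_add_const (q : ℝ → E → Fin N → Fin N → ℝ) (b : ℝ → E → Fin N → ℝ)
    (f : E → ℝ) (c : ℝ) (s : ℝ) (x : E) :
    ellipticOp q b (fun y => f y + c) s x = ellipticOp q b f s x := by
  unfold ellipticOp secondDerivCoord
  simp only [fderiv_add_const]

lemma fderiv_comb {f g : E → ℝ} (hf : ContDiff ℝ 2 f) (hg : ContDiff ℝ 2 g) (c : ℝ) (y : E) :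
    fderiv ℝ (fun z => f z - c * g z) y = fderiv ℝ f y - c • fderiv ℝ g y := by
  have hfd := hf.differentiable two_ne_zero y
  have hgd := hg.differentiable two_ne_zero y
  rw [fderiv_fun_sub hfd (hgd.const_mul c), fderiv_const_mul hgd]

lemma secondDerivCoord_comb {f g : E → ℝ} (hf : ContDiff ℝ 2 f) (hg : ContDiff ℝ 2 g)
    (c : ℝ) (x : E) (i j : Fin N) :
    secondDerivCoord (fun z => f z - c * g z) x i j
      = secondDerivCoord f x i j - c * secondDerivCoord g x i j := by
  have h1 : ContDiff ℝ 1 (fun y => fderiv ℝ f y (EuclideanSpace.single i 1)) :=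
    (hf.fderiv_right (le_refl 2)).clm_apply contDiff_const
  have h2 : ContDiff ℝ 1 (fun y => fderiv ℝ g y (EuclideanSpace.single i 1)) :=
    (hg.fderiv_right (le_refl 2)).clm_apply contDiff_const
  unfold secondDerivCoord
  have heq : (fun y => fderiv ℝ (fun z => f z - c * g z) y (EuclideanSpace.single i 1))
      = fun y => fderiv ℝ f y (EuclideanSpace.single i 1)
          - c * fderiv ℝ g y (EuclideanSpace.single i 1) := by
    funext y
    rw [fderiv_comb hf hg c y]
    simp
  rw [heq, fderiv_fun_sub (h1.differentiable one_ne_zero x)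
    (((h2.differentiable one_ne_zero) x).const_mul c), fderiv_const_mul ((h2.differentiable one_ne_zero) x)]
  simp

lemma sum_sub_mul {α : Type*} (s : Finset α) (F G : α → ℝ) (c : ℝ) :
    ∑ a ∈ s, (F a - c * G a) = ∑ a ∈ s, F a - c * ∑ a ∈ s, G a := by
  rw [Finset.mul_sum, ← Finset.sum_sub_distrib]

lemma ellipticOp_comb (q : ℝ → E → Fin N → Fin N → ℝ) (b : ℝ → E → Fin N → ℝ)
    {f g : E → ℝ} (hf : ContDiff ℝ 2 f) (hg : ContDiff ℝ 2 g) (c : ℝ) (s : ℝ) (x : E) :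
    ellipticOp q b (fun y => f y - c * g y) s x
      = ellipticOp q b f s x - c * ellipticOp q b g s x := by
  unfold ellipticOp
  simp only [secondDerivCoord_comb hf hg c x, fderiv_comb hf hg c x,
    ContinuousLinearMap.sub_apply, ContinuousLinearMap.smul_apply, smul_eq_mul]
  have key1 : ∑ i, ∑ j, q s x i j * (secondDerivCoord f x i j - c * secondDerivCoord g x i j)
      = (∑ i, ∑ j, q s x i j * secondDerivCoord f x i j)
        - c * ∑ i, ∑ j, q s x i j * secondDerivCoord g x i j := by
    have h : ∀ i : Fin N,
        ∑ j, q s x i j * (secondDerivCoord f x i j - c * secondDerivCoord g x i j)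
        = ∑ j, (q s x i j * secondDerivCoord f x i j)
          - c * ∑ j, (q s x i j * secondDerivCoord g x i j) := by
      intro i
      rw [← sum_sub_mul]
      exact Finset.sum_congr rfl fun j _ => by ring
    simp_rw [h]
    rw [sum_sub_mul]
  have key2 : ∑ j, b s x j * (fderiv ℝ f x (EuclideanSpace.single j 1)
        - c * fderiv ℝ g x (EuclideanSpace.single j 1))
      = (∑ j, b s x j * fderiv ℝ f x (EuclideanSpace.single j 1))
        - c * ∑ j, b s x j * fderiv ℝ g x (EuclideanSpace.single j 1) := by
    rw [← sum_sub_mul]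
    exact Finset.sum_congr rfl fun j _ => by ring
  rw [key1, key2]
  ring

lemma deriv_nonneg_of_max_left {g : ℝ → ℝ} {L a b' t₀ : ℝ} (hg : HasDerivAt g L t₀)
    (hmax : ∀ t ∈ Icc a b', g t ≤ g t₀) (hat : a < t₀) (htb : t₀ ≤ b') : 0 ≤ L := by
  have hslope := hasDerivAt_iff_tendsto_slope.mp hg
  have h2 : Tendsto (slope g t₀) (𝓝[<] t₀) (𝓝 L) :=
    hslope.mono_left (nhdsWithin_mono _ fun s hs => ne_of_lt hs)
  refine ge_of_tendsto h2 ?_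
  filter_upwards [Ioo_mem_nhdsLT_of_mem (⟨hat, le_rfl⟩ : t₀ ∈ Ioc a t₀)] with s hs
  have h1 : g s ≤ g t₀ := hmax s ⟨hs.1.le, hs.2.le.trans htb⟩
  have hs0 : s - t₀ < 0 := by linarith [hs.2]
  rw [slope_def_field]
  have h3 : g s - g t₀ ≤ 0 := by linarith
  exact div_nonneg_of_nonpos h3 hs0.le


end Aux

/-- Generalized maximum principle: if there is a Lyapunov function `φ` blowing up at
infinity with `𝒜 φ - λ φ ≤ 0` on `[a,b] × ℝᴺ`, then any bounded subsolution `u` of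
`Dₜ u - 𝒜 u ≤ 0` with `u(a,·) ≤ 0` satisfies `u ≤ 0` on `[a,b] × ℝᴺ`. -/
theorem statement0 {N : ℕ}
    (q : ℝ → EuclideanSpace ℝ (Fin N) → Fin N → Fin N → ℝ)
    (b : ℝ → EuclideanSpace ℝ (Fin N) → Fin N → ℝ)
    (hq_cont : Continuous fun p : ℝ × EuclideanSpace ℝ (Fin N) => q p.1 p.2)
    (hb_cont : Continuous fun p : ℝ × EuclideanSpace ℝ (Fin N) => b p.1 p.2)
    (η : ℝ → EuclideanSpace ℝ (Fin N) → ℝ) (η₀ : ℝ) (hη₀ : 0 < η₀)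
    (hη : ∀ s x, η₀ ≤ η s x)
    (hsymm : ∀ s x i j, q s x i j = q s x j i)
    (hell : ∀ s x (ξ : Fin N → ℝ), η s x * ∑ i, ξ i ^ 2 ≤ ∑ i, ∑ j, q s x i j * ξ i * ξ j)
    (a b' : ℝ) (hab : a < b')
    (φ : EuclideanSpace ℝ (Fin N) → ℝ) (hφ : ContDiff ℝ 2 φ)
    (hφ_blowup : Tendsto φ (cocompact (EuclideanSpace ℝ (Fin N))) atTop)
    (lam : ℝ) (hlam : 0 < lam)
    (hLyap : ∀ s ∈ Icc a b', ∀ x, ellipticOp q b φ s x - lam * φ x ≤ 0)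
    (u : ℝ → EuclideanSpace ℝ (Fin N) → ℝ)
    (hu_cont : ContinuousOn (fun p : ℝ × EuclideanSpace ℝ (Fin N) => u p.1 p.2)
      (Icc a b' ×ˢ univ))
    (hu_bdd : ∃ M, ∀ t ∈ Icc a b', ∀ x, |u t x| ≤ M)
    (hu_t : ∀ t ∈ Ioc a b', ∀ x, DifferentiableAt ℝ (fun r => u r x) t)
    (hu_x : ∀ t ∈ Ioc a b', ContDiff ℝ 2 (u t))
    (hsub : ∀ t ∈ Ioc a b', ∀ x,
      deriv (fun r => u r x) t - ellipticOp q b (u t) t x ≤ 0)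
    (hinit : ∀ x, u a x ≤ 0) :
    ∀ t ∈ Icc a b', ∀ x, u t x ≤ 0 := by
  classical
  obtain ⟨M, hM⟩ := hu_bdd
  -- Step 1: shift φ to make it ≥ 1
  obtain ⟨K₀, hK₀c, hK₀⟩ : ∃ K₀, IsCompact K₀ ∧ K₀ᶜ ⊆ {x | (0:ℝ) ≤ φ x} :=
    mem_cocompact.mp (hφ_blowup.eventually (eventually_ge_atTop 0))
  obtain ⟨C, hC⟩ := hK₀c.exists_bound_of_continuousOn hφ.continuous.continuousOn
  set cs : ℝ := max C 0 + 1 with hcs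
  have hcs1 : 1 ≤ cs := by
    have := le_max_right C 0
    simp only [hcs]; linarith
  set ψ : EuclideanSpace ℝ (Fin N) → ℝ := fun x => φ x + cs with hψdef
  have hψ : ContDiff ℝ 2 ψ := hφ.add contDiff_const
  have hψ1 : ∀ x, 1 ≤ ψ x := by
    intro x
    by_cases hx : x ∈ K₀
    · have h1 := hC x hx
      have h2 : -C ≤ φ x := by
        have := abs_le.mp (by simpa [Real.norm_eq_abs] using h1)
        linarith [this.1]
      have := le_max_left C 0
      simp only [hψdef, hcs]; linarith
    · have h0 : (0:ℝ) ≤ φ x := hK₀ hx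
      simp only [hψdef]; linarith
  have hψ_blow : Tendsto ψ (cocompact (EuclideanSpace ℝ (Fin N))) atTop :=
    tendsto_atTop_add_const_right _ cs hφ_blowup
  have hψ_Lyap : ∀ s ∈ Icc a b', ∀ x,
      ellipticOp q b ψ s x ≤ lam * ψ x - lam * cs := by
    intro s hs x
    have h1 := hLyap s hs x
    have h2 : ellipticOp q b ψ s x = ellipticOp q b φ s x := ellipticOp_add_const q b φ cs s x
    simp only [hψdef]
    rw [h2]
    nlinarith
  -- Step 2: for each ε > 0, u t x ≤ ε * exp (lam (t-a)) * ψ x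
  have main : ∀ ε : ℝ, 0 < ε → ∀ t ∈ Icc a b', ∀ x,
      u t x ≤ ε * Real.exp (lam * (t - a)) * ψ x := by
    intro ε hε
    set k : ℝ → ℝ := fun t => ε * Real.exp (lam * (t - a)) with hkdef
    have hk_pos : ∀ t, 0 < k t := fun t => mul_pos hε (Real.exp_pos _)
    have hk_ge : ∀ t ∈ Icc a b', ε ≤ k t := by
      intro t ht
      have h1 : (1:ℝ) ≤ Real.exp (lam * (t - a)) :=
        Real.one_le_exp (by nlinarith [ht.1])
      simp only [hkdef]
      nlinarith
    have hkderiv : ∀ t, HasDerivAt k (lam * k t) t := by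
      intro t
      have h1 : HasDerivAt (fun t : ℝ => lam * (t - a)) lam t := by
        simpa using ((hasDerivAt_id t).sub_const a).const_mul lam
      have h2 := (h1.exp).const_mul ε
      simpa [hkdef, mul_comm, mul_assoc, mul_left_comm] using h2
    set V : ℝ × EuclideanSpace ℝ (Fin N) → ℝ := fun p => u p.1 p.2 - k p.1 * ψ p.2 with hVdef
    have hkc : Continuous k := by
      simp only [hkdef]
      exact continuous_const.mul (Real.continuous_exp.comp
        (continuous_const.mul (continuous_id.sub continuous_const)))
    have hVcont : ContinuousOn V (Icc a b' ×ˢ univ) :=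
      hu_cont.sub (((hkc.comp continuous_fst).mul
        (hψ.continuous.comp continuous_snd)).continuousOn)
    set m₀ : ℝ := V (a, 0) with hm₀
    set R : ℝ := (M - m₀) / ε with hR
    obtain ⟨K, hKc, hKge⟩ : ∃ K, IsCompact K ∧ Kᶜ ⊆ {x | R ≤ ψ x} :=
      mem_cocompact.mp (hψ_blow.eventually (eventually_ge_atTop R))
    set K' : Set (EuclideanSpace ℝ (Fin N)) := insert 0 K with hK'
    have hK'c : IsCompact K' := hKc.insert 0
    set D : Set (ℝ × EuclideanSpace ℝ (Fin N)) := Icc a b' ×ˢ K' with hD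
    have hDc : IsCompact D := isCompact_Icc.prod hK'c
    have hDne : D.Nonempty := ⟨(a, 0), ⟨⟨le_rfl, hab.le⟩, mem_insert _ _⟩⟩
    have ha0D : (a, (0:EuclideanSpace ℝ (Fin N))) ∈ D := ⟨⟨le_rfl, hab.le⟩, mem_insert _ _⟩
    obtain ⟨p₀, hp₀D, hp₀max⟩ := hDc.exists_isMaxOn hDne
      (hVcont.mono (by simp only [hD]; exact prod_mono subset_rfl (subset_univ _)))
    have hmaxD : ∀ p ∈ D, V p ≤ V p₀ := fun p hp => hp₀max hp
    have hglobal : ∀ t ∈ Icc a b', ∀ x, V (t, x) ≤ V p₀ := by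
      intro t ht x
      by_cases hx : x ∈ K'
      · exact hmaxD (t, x) ⟨ht, hx⟩
      · have hxK : x ∉ K := fun h => hx (mem_insert_of_mem _ h)
        have hRx : R ≤ ψ x := hKge hxK
        have hψx0 : (0:ℝ) ≤ ψ x := le_trans zero_le_one (hψ1 x)
        have h1 : ε * ψ x ≤ k t * ψ x := mul_le_mul_of_nonneg_right (hk_ge t ht) hψx0
        have h2 : V (t, x) ≤ M - ε * ψ x := by
          have := (abs_le.mp (hM t ht x)).2
          simp only [hVdef]
          linarith
        have h3 : M - m₀ ≤ ε * ψ x := by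
          have : M - m₀ = ε * R := by rw [hR]; field_simp
          nlinarith
        have h4 : m₀ ≤ V p₀ := hmaxD _ ha0D
        linarith
    obtain ⟨t₀, x₀⟩ := p₀
    have ht₀I : t₀ ∈ Icc a b' := hp₀D.1
    -- the max of V is ≤ 0
    have hVmax_nonpos : V (t₀, x₀) ≤ 0 := by
      rcases eq_or_lt_of_le ht₀I.1 with hta | hta
      · -- t₀ = a
        have h1 : u a x₀ ≤ 0 := hinit x₀
        have h2 : ε ≤ k a * ψ x₀ := by
          have hka : k a = ε := by simp [hkdef]
          rw [hka]
          nlinarith [hψ1 x₀]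
        simp only [hVdef, ← hta]
        linarith
      · -- a < t₀ : derive a contradiction
        exfalso
        have ht₀ : t₀ ∈ Ioc a b' := ⟨hta, ht₀I.2⟩
        set f : EuclideanSpace ℝ (Fin N) → ℝ := fun x => u t₀ x - k t₀ * ψ x with hf
        have hfC2 : ContDiff ℝ 2 f := (hu_x t₀ ht₀).sub (contDiff_const.mul hψ)
        have hfmax : ∀ x, f x ≤ f x₀ := fun x => hglobal t₀ ht₀I x
        have hEf : ellipticOp q b f t₀ x₀ ≤ 0 :=
          ellipticOp_nonpos_at_max q b t₀
            (psd_of_ell q η η₀ hη₀ hη hsymm hell t₀ x₀) hfC2 hfmax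
        have hEcomb : ellipticOp q b f t₀ x₀
            = ellipticOp q b (u t₀) t₀ x₀ - k t₀ * ellipticOp q b ψ t₀ x₀ :=
          ellipticOp_comb q b (hu_x t₀ ht₀) hψ (k t₀) t₀ x₀
        -- time derivative
        have hg : HasDerivAt (fun r => u r x₀ - k r * ψ x₀)
            (deriv (fun r => u r x₀) t₀ - lam * k t₀ * ψ x₀) t₀ := by
          have h1 := (hu_t t₀ ht₀ x₀).hasDerivAt
          have h2 := (hkderiv t₀).mul_const (ψ x₀)
          simpa [mul_assoc] using h1.fun_sub h2
        have hgmax : ∀ t ∈ Icc a b', (fun r => u r x₀ - k r * ψ x₀) t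
            ≤ (fun r => u r x₀ - k r * ψ x₀) t₀ := fun t ht => hglobal t ht x₀
        have hd1 : 0 ≤ deriv (fun r => u r x₀) t₀ - lam * k t₀ * ψ x₀ :=
          deriv_nonneg_of_max_left hg hgmax hta ht₀I.2
        have hd2 := hsub t₀ ht₀ x₀
        have hd4 := hψ_Lyap t₀ ht₀I x₀
        have hd5 : k t₀ * ellipticOp q b ψ t₀ x₀ ≤ k t₀ * (lam * ψ x₀ - lam * cs) :=
          mul_le_mul_of_nonneg_left hd4 (hk_pos t₀).le
        have hkl : 0 < k t₀ * lam := mul_pos (hk_pos t₀) hlam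
        nlinarith [hd1, hd2, hEf, hEcomb, hd5, hkl]
    intro t ht x
    have h5 := hglobal t ht x
    simp only [hVdef] at h5 hVmax_nonpos
    simp only [hkdef] at h5 hVmax_nonpos
    linarith [h5, hVmax_nonpos]
  -- Step 3: let ε → 0
  intro t ht x
  by_contra hpos
  push_neg at hpos
  have hC0 : 0 < Real.exp (lam * (t - a)) * ψ x :=
    mul_pos (Real.exp_pos _) (lt_of_lt_of_le zero_lt_one (hψ1 x))
  set ε := u t x / (2 * (Real.exp (lam * (t - a)) * ψ x)) with hεdef
  have hε : 0 < ε := div_pos hpos (by positivity)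
  have h1 := main ε hε t ht x
  have h2 : ε * Real.exp (lam * (t - a)) * ψ x = u t x / 2 := by
    rw [hεdef]
    field_simp [(lt_of_lt_of_le zero_lt_one (hψ1 x)).ne']
  rw [h2] at h1
  linarith
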